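/- Datalog programs terminate: call a rule flat if every argument of its head clause and of each of its body clauses is a variable or a literal. If every rule of a DLS program P is flat (i.e., P lies in the Datalog subset of DLS), then the least fixed point of IC_P is a finite database, and the iteration db₀ = ∅, db_{n+1} = IC_P(db_n) reaches this least fixed point after finitely many steps (there exists k with db_k = db_{k+1} = lfp IC_P). -/

import Mathlib

namespace DLS

/-! Datalog with first-class facts (DLS): basic syntax and semantics. -/

variable {Rel Lit Var : Type}

/-- A value is either a literal or a fact `R(v₁,…,vₙ)`. -/
inductive Val (Rel Lit : Type) : Type where
  | lit : Lit → Val Rel Lit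
  | fact : Rel → List (Val Rel Lit) → Val Rel Lit

/-- A fact is a relation symbol applied to a finite list of values. -/
abbrev Fact (Rel Lit : Type) : Type := Rel × List (Val Rel Lit)

/-- A database is a set of facts. -/
abbrev Database (Rel Lit : Type) : Type := Set (Fact Rel Lit)

def Fact.toVal (f : Fact Rel Lit) : Val Rel Lit := Val.fact f.1 f.2

mutual
/-- All subfacts of a value: `subfact(R(v₁,…,vₙ)) = {R(v₁,…,vₙ)} ∪ ⋃ᵢ subfact(vᵢ)`,
    and `subfact(v) = ∅` for a literal `v`. -/
def Val.subfacts : Val Rel Lit → Set (Fact Rel Lit)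
  | .lit _ => ∅
  | .fact R args => insert (R, args) (Val.subfactsList args)
def Val.subfactsList : List (Val Rel Lit) → Set (Fact Rel Lit)
  | [] => ∅
  | v :: vs => v.subfacts ∪ Val.subfactsList vs
end

/-- The `subfact` function on facts. -/
def Fact.subfact (f : Fact Rel Lit) : Set (Fact Rel Lit) :=
  Val.subfacts (Val.fact f.1 f.2)

/-- A database is subfact-closed if `db = ⋃ {subfact(f) | f ∈ db}`. -/
def SubfactClosed (db : Database Rel Lit) : Prop :=
  db = ⋃ f ∈ db, Fact.subfact f

/-- An argument of a clause: a variable, a literal, or a (sub)clause. -/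
inductive Arg (Rel Lit Var : Type) : Type where
  | var : Var → Arg Rel Lit Var
  | lit : Lit → Arg Rel Lit Var
  | clause : Rel → List (Arg Rel Lit Var) → Arg Rel Lit Var

/-- A clause is a relation symbol applied to a finite list of arguments. -/
abbrev Clause (Rel Lit Var : Type) : Type := Rel × List (Arg Rel Lit Var)

/-- A substitution maps variables to values. -/
abbrev Subst (Rel Lit Var : Type) : Type := Var → Val Rel Lit

mutual
/-- Applying a substitution to an argument yields a value. -/
def Arg.subst (θ : Subst Rel Lit Var) : Arg Rel Lit Var → Val Rel Lit
  | .var x => θ x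
  | .lit l => .lit l
  | .clause R args => .fact R (Arg.substList θ args)
def Arg.substList (θ : Subst Rel Lit Var) : List (Arg Rel Lit Var) → List (Val Rel Lit)
  | [] => []
  | a :: as => Arg.subst θ a :: Arg.substList θ as
end

/-- `c[θ]`: the fact obtained by substituting each variable of clause `c` by its image. -/
def Clause.subst (θ : Subst Rel Lit Var) (c : Clause Rel Lit Var) : Fact Rel Lit :=
  (c.1, Arg.substList θ c.2)

mutual
/-- The variables occurring in an argument. -/
def Arg.vars : Arg Rel Lit Var → Set Var
  | .var x => {x}
  | .lit _ => ∅
  | .clause _ args => Arg.varsList args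
def Arg.varsList : List (Arg Rel Lit Var) → Set Var
  | [] => ∅
  | a :: as => a.vars ∪ Arg.varsList as
end

/-- The variables occurring in a clause. -/
def Clause.vars (c : Clause Rel Lit Var) : Set Var := Arg.varsList c.2

mutual
/-- The literals occurring in an argument. -/
def Arg.lits : Arg Rel Lit Var → Set Lit
  | .var _ => ∅
  | .lit l => {l}
  | .clause _ args => Arg.litsList args
def Arg.litsList : List (Arg Rel Lit Var) → Set Lit
  | [] => ∅
  | a :: as => a.lits ∪ Arg.litsList as
end

/-- The literals occurring in a clause. -/
def Clause.lits (c : Clause Rel Lit Var) : Set Lit := Arg.litsList c.2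

/-- A rule has a head clause and a finite set of body clauses. -/
structure Rule (Rel Lit Var : Type) : Type where
  head : Clause Rel Lit Var
  body : Set (Clause Rel Lit Var)
  body_finite : body.Finite

/-- The literals occurring in a rule. -/
def Rule.lits (R : Rule Rel Lit Var) : Set Lit :=
  R.head.lits ∪ ⋃ c ∈ R.body, c.lits

/-- A rule is well-scoped if every variable of the head occurs in the body. -/
def Rule.WellScoped (R : Rule Rel Lit Var) : Prop :=
  R.head.vars ⊆ ⋃ c ∈ R.body, c.vars

/-- Immediate consequence of a rule:
    `IC_R(db) = db ∪ ⋃ { subfact(Head(R)[θ]) | θ with Body(R)[θ] ⊆ db }`. -/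
def Rule.IC (R : Rule Rel Lit Var) (db : Database Rel Lit) : Database Rel Lit :=
  db ∪ ⋃ (θ : Subst Rel Lit Var) (_ : ∀ c ∈ R.body, Clause.subst θ c ∈ db),
      Fact.subfact (Clause.subst θ R.head)

/-- A DLS program is a finite set of well-scoped rules. -/
structure Program (Rel Lit Var : Type) : Type where
  rules : Set (Rule Rel Lit Var)
  rules_finite : rules.Finite
  wellScoped : ∀ R ∈ rules, R.WellScoped

/-- Immediate consequence of a program: `IC_P(db) = db ∪ ⋃_{R ∈ P} IC_R(db)`. -/
def Program.IC (P : Program Rel Lit Var) (db : Database Rel Lit) : Database Rel Lit :=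
  db ∪ ⋃ R ∈ P.rules, R.IC db

theorem Rule.IC_mono (R : Rule Rel Lit Var) : Monotone R.IC := by
  intro a b hab x hx
  rcases hx with hx | hx
  · exact Or.inl (hab hx)
  · right
    simp only [Set.mem_iUnion] at hx ⊢
    obtain ⟨θ, hθ, hm⟩ := hx
    exact ⟨θ, fun c hc => hab (hθ c hc), hm⟩

theorem Program.IC_mono (P : Program Rel Lit Var) : Monotone P.IC := by
  intro a b hab x hx
  rcases hx with hx | hx
  · exact Or.inl (hab hx)
  · right
    simp only [Set.mem_iUnion] at hx ⊢
    obtain ⟨R, hR, hm⟩ := hx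
    exact ⟨R, hR, R.IC_mono hab hm⟩

/-- The immediate consequence operator `IC_P`, as a monotone map on the complete
    lattice of databases ordered by inclusion. Its least fixed point is
    `OrderHom.lfp P.ICHom`. -/
def Program.ICHom (P : Program Rel Lit Var) : Database Rel Lit →o Database Rel Lit :=
  ⟨P.IC, P.IC_mono⟩

/-- `I ⊨ R`: for every substitution θ, `Body(R)[θ] ⊆ I` implies `Head(R)[θ] ∈ I`. -/
def Models (I : Database Rel Lit) (R : Rule Rel Lit Var) : Prop :=
  ∀ θ : Subst Rel Lit Var, (∀ c ∈ R.body, Clause.subst θ c ∈ I) → Clause.subst θ R.head ∈ I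

/-- A Herbrand model of `P` is a subfact-closed database satisfying every rule of `P`. -/
def HerbrandModel (P : Program Rel Lit Var) (I : Database Rel Lit) : Prop :=
  SubfactClosed I ∧ ∀ R ∈ P.rules, Models I R

/-- An argument is flat if it is a variable or a literal (not a nested clause). -/
def Arg.IsFlat : Arg Rel Lit Var → Prop
  | .clause _ _ => False
  | _ => True

/-- A clause is flat if every argument is a variable or a literal. -/
def Clause.Flat (c : Clause Rel Lit Var) : Prop := ∀ a ∈ c.2, a.IsFlat

/-- A rule is flat if its head clause and all its body clauses are flat. -/
def Rule.Flat (R : Rule Rel Lit Var) : Prop := R.head.Flat ∧ ∀ c ∈ R.body, c.Flat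

/-- A fact is flat if every argument in its argument list is a literal. -/
def Fact.Flat (f : Fact Rel Lit) : Prop := ∀ v ∈ f.2, ∃ l : Lit, v = Val.lit l

/-- `natFact z s n` encodes the natural number `n` as the fact
    `s(s(...(z())...))` with `n` applications of `s`. -/
def natFact (z s : Rel) : ℕ → Fact Rel Lit
  | 0 => (z, [])
  | n + 1 => (s, [(natFact z s n).toVal])


/-! With flat rules a derived fact can only be a head relation applied, with the head's arity,
to literals: a head argument is a literal of the program or the image of a variable, and
well-scopedness makes that image an argument of a body fact, already a literal of the program.
These finitely many facts form a set closed under `IC_P`, so they contain its least fixed point;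
the increasing Kleene chain below that finite set must repeat, hence stabilise. -/

theorem _root_.OrderHom.exists_iterate_bot_eq_lfp {α : Type*} [CompleteLattice α] (f : α →o α)
    (hfin : (Set.Iic f.lfp).Finite) :
    ∃ k : ℕ, f^[k] ⊥ = f^[k + 1] ⊥ ∧ f^[k] ⊥ = f.lfp := by
  have hle : ∀ n, f^[n] ⊥ ≤ f.lfp := fun n =>
    (f.monotone.iterate n bot_le).trans_eq (Function.iterate_fixed f.map_lfp n)
  have hmono : Monotone fun n => f^[n] ⊥ := Monotone.monotone_iterate_of_le_map f.monotone bot_le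
  obtain ⟨m, n, hmn, heq⟩ := hfin.exists_lt_map_eq_of_forall_mem hle
  have hfix : f^[m] ⊥ = f^[m + 1] ⊥ :=
    le_antisymm (hmono m.le_succ) (heq ▸ hmono (Nat.succ_le_of_lt hmn))
  refine ⟨m, hfix, le_antisymm (hle m) (f.lfp_le_fixed ?_)⟩
  rw [← Function.iterate_succ_apply' f, ← hfix]

theorem _root_.List.finite_setOf_length_eq_forall_mem {α : Type*} {S : Set α} (hS : S.Finite)
    (n : ℕ) : {l : List α | l.length = n ∧ ∀ a ∈ l, a ∈ S}.Finite := by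
  have := hS.to_subtype
  refine ((List.finite_length_eq S n).image (List.map (↑))).subset ?_
  rintro l ⟨hlen, hS⟩
  lift l to List S using hS
  exact ⟨l, by simpa using hlen, rfl⟩

mutual
theorem Arg.lits_finite : ∀ a : Arg Rel Lit Var, a.lits.Finite
  | .var _ => Set.finite_empty
  | .lit l => Set.finite_singleton l
  | .clause _ args => Arg.litsList_finite args
theorem Arg.litsList_finite : ∀ args : List (Arg Rel Lit Var), (Arg.litsList args).Finite
  | [] => Set.finite_empty
  | a :: as => (Arg.lits_finite a).union (Arg.litsList_finite as)
end

theorem Rule.lits_finite (R : Rule Rel Lit Var) : R.lits.Finite :=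
  (Arg.litsList_finite _).union (R.body_finite.biUnion fun c _ => Arg.litsList_finite c.2)

def Program.lits (P : Program Rel Lit Var) : Set Lit := ⋃ R ∈ P.rules, R.lits

theorem Program.lits_finite (P : Program Rel Lit Var) : P.lits.Finite :=
  P.rules_finite.biUnion fun R _ => R.lits_finite

theorem Arg.length_substList (θ : Subst Rel Lit Var) (args : List (Arg Rel Lit Var)) :
    (Arg.substList θ args).length = args.length := by
  induction args with
  | nil => rfl
  | cons a as ih => simp [Arg.substList, ih]

theorem Arg.subst_mem_substList {θ : Subst Rel Lit Var} {args : List (Arg Rel Lit Var)}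
    (hflat : ∀ a ∈ args, a.IsFlat) {x : Var} (hx : x ∈ Arg.varsList args) :
    θ x ∈ Arg.substList θ args := by
  induction args with
  | nil => simp [Arg.varsList] at hx
  | cons a as ih =>
    simp only [Arg.varsList, Set.mem_union] at hx
    rcases hx with hx | hx
    · cases a with
      | var y => simp_all [Arg.vars, Arg.substList, Arg.subst]
      | lit l => simp [Arg.vars] at hx
      | clause r as' => exact (hflat _ List.mem_cons_self).elim
    · simp [Arg.substList, ih (fun a ha => hflat a (List.mem_cons_of_mem _ ha)) hx]

theorem Arg.mem_substList {θ : Subst Rel Lit Var} {args : List (Arg Rel Lit Var)}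
    (hflat : ∀ a ∈ args, a.IsFlat) {v : Val Rel Lit} (hv : v ∈ Arg.substList θ args) :
    v ∈ θ '' Arg.varsList args ∪ Val.lit '' Arg.litsList args := by
  induction args with
  | nil => simp [Arg.substList] at hv
  | cons a as ih =>
    simp only [Arg.substList, List.mem_cons] at hv
    rcases hv with rfl | hv
    · cases a with
      | var x => exact Or.inl ⟨x, by simp [Arg.varsList, Arg.vars], rfl⟩
      | lit l => exact Or.inr ⟨l, by simp [Arg.litsList, Arg.lits], rfl⟩
      | clause r as' => exact (hflat _ List.mem_cons_self).elim
    · have := ih (fun a ha => hflat a (List.mem_cons_of_mem _ ha)) hv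
      simp only [Arg.varsList, Arg.litsList, Set.image_union]
      exact Set.union_subset_union Set.subset_union_right Set.subset_union_right this

theorem Val.subfactsList_eq_empty {vs : List (Val Rel Lit)} (h : ∀ v ∈ vs, ∃ l, v = Val.lit l) :
    Val.subfactsList vs = ∅ := by
  induction vs with
  | nil => rfl
  | cons v vs ih =>
    obtain ⟨l, rfl⟩ := h v List.mem_cons_self
    simp [Val.subfactsList, Val.subfacts, ih fun v hv => h v (List.mem_cons_of_mem _ hv)]

theorem Fact.subfact_of_flat {f : Fact Rel Lit} (hf : f.Flat) : f.subfact = {f} := by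
  simp [Fact.subfact, Val.subfacts, Val.subfactsList_eq_empty hf]

def Fact.ArgsIn (L : Set Lit) (f : Fact Rel Lit) : Prop := ∀ v ∈ f.2, v ∈ Val.lit '' L

theorem Fact.ArgsIn.flat {L : Set Lit} {f : Fact Rel Lit} (hf : f.ArgsIn L) : f.Flat :=
  fun v hv => (hf v hv).imp fun _ hl => hl.2.symm

theorem Rule.argsIn_subst_head {R : Rule Rel Lit Var} (hflat : R.Flat) (hws : R.WellScoped)
    {L : Set Lit} (hL : R.lits ⊆ L) {θ : Subst Rel Lit Var}
    (hbody : ∀ c ∈ R.body, (Clause.subst θ c).ArgsIn L) : (Clause.subst θ R.head).ArgsIn L := by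
  intro v hv
  rcases Arg.mem_substList hflat.1 hv with ⟨x, hx, rfl⟩ | ⟨l, hl, rfl⟩
  · obtain ⟨c, hc, hxc⟩ := Set.mem_iUnion₂.mp (hws hx)
    exact hbody c hc _ (Arg.subst_mem_substList (hflat.2 c hc) hxc)
  · exact ⟨l, hL (Or.inl hl), rfl⟩

def Program.datalogBase (P : Program Rel Lit Var) : Database Rel Lit :=
  {f | (∃ R ∈ P.rules, f.1 = R.head.1 ∧ f.2.length = R.head.2.length) ∧ f.ArgsIn P.lits}

theorem Program.datalogBase_finite (P : Program Rel Lit Var) : P.datalogBase.Finite := by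
  refine (P.rules_finite.biUnion fun R _ =>
    (List.finite_setOf_length_eq_forall_mem (P.lits_finite.image Val.lit) R.head.2.length).image
      (Prod.mk R.head.1)).subset ?_
  rintro ⟨r, args⟩ ⟨⟨R, hR, rfl, hlen⟩, hargs⟩
  exact Set.mem_biUnion hR ⟨args, ⟨hlen, hargs⟩, rfl⟩

theorem Program.IC_datalogBase_subset (P : Program Rel Lit Var) (hflat : ∀ R ∈ P.rules, R.Flat) :
    P.IC P.datalogBase ⊆ P.datalogBase := by
  rintro f (hf | hf)
  · exact hf
  obtain ⟨R, hR, hf | hf⟩ := Set.mem_iUnion₂.mp hf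
  · exact hf
  obtain ⟨θ, hθ, hf⟩ := Set.mem_iUnion₂.mp hf
  have hhead : (Clause.subst θ R.head).ArgsIn P.lits :=
    R.argsIn_subst_head (hflat R hR) (P.wellScoped R hR) (Set.subset_biUnion_of_mem hR)
      fun c hc => (hθ c hc).2
  rw [Fact.subfact_of_flat hhead.flat, Set.mem_singleton_iff] at hf
  subst hf
  exact ⟨⟨R, hR, rfl, Arg.length_substList θ _⟩, hhead⟩

/-- Datalog programs terminate: if every rule of a DLS program
`P` is flat, then the least fixed point of `IC_P` is finite, and the iteration
`db₀ = ∅`, `db_{n+1} = IC_P(db_n)` reaches it after finitely many steps. -/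
theorem flat_program_terminates {Rel Lit Var : Type} (P : Program Rel Lit Var)
    (hflat : ∀ R ∈ P.rules, R.Flat) :
    (OrderHom.lfp P.ICHom : Database Rel Lit).Finite ∧
    ∃ k : ℕ, P.IC^[k] ∅ = P.IC^[k + 1] ∅ ∧
      P.IC^[k] ∅ = OrderHom.lfp P.ICHom := by
  have hfin : (OrderHom.lfp P.ICHom).Finite :=
    P.datalogBase_finite.subset (OrderHom.lfp_le _ (P.IC_datalogBase_subset hflat))
  exact ⟨hfin, P.ICHom.exists_iterate_bot_eq_lfp hfin.finite_subsets⟩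

end DLS
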